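/- arXiv:2404.16186 — 6 statements merged into one kernel-verified Lean document; each statement's English description precedes it below -/
import Mathlib

section
/- A path P_n on n vertices (n ≥ 6) has total domination subdivision number 3 if and only if n ≡ 2 (mod 4). -/
open SimpleGraph

variable {V : Type*}

/-- `S` is a total dominating set of `G`. -/
def IsTotalDomSet (G : SimpleGraph V) (S : Set V) : Prop :=
  ∀ v : V, ∃ u ∈ S, G.Adj v u

/-- The total domination number. -/
noncomputable def gammaT (G : SimpleGraph V) [Fintype V] : ℕ :=
  sInf {n | ∃ S : Finset V, S.card = n ∧ IsTotalDomSet G ↑S}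

/-- The graph obtained from `G` by subdividing each edge in `F` once. -/
def subdivide (G : SimpleGraph V) (F : Finset (Sym2 V)) :
    SimpleGraph (V ⊕ {e : Sym2 V // e ∈ F}) where
  Adj x y :=
    match x, y with
    | Sum.inl u, Sum.inl v => G.Adj u v ∧ s(u, v) ∉ F
    | Sum.inl u, Sum.inr e => u ∈ e.1
    | Sum.inr e, Sum.inl u => u ∈ e.1
    | Sum.inr _, Sum.inr _ => False
  symm := by
    constructor
    rintro (u | e) (v | f) h
    · exact ⟨h.1.symm, by rw [Sym2.eq_swap]; exact h.2⟩
    · exact h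
    · exact h
    · exact h
  loopless := by
    constructor
    rintro (u | e) h
    · exact G.irrefl h.1
    · exact h

/-- The total domination subdivision number. -/
noncomputable def sdGammaT (G : SimpleGraph V) [Fintype V] [DecidableEq V] : ℕ :=
  sInf {k | ∃ F : Finset (Sym2 V), ↑F ⊆ G.edgeSet ∧ F.card = k ∧
    gammaT G < gammaT (subdivide G F)}

def IsLeaf (G : SimpleGraph V) (v : V) : Prop := ∃! u, G.Adj v u

def IsSupport (G : SimpleGraph V) (v : V) : Prop := ∃ u, G.Adj v u ∧ IsLeaf G u

def IsWeakSupport (G : SimpleGraph V) (v : V) : Prop := ∃! u, G.Adj v u ∧ IsLeaf G u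

def IsStrongSupport (G : SimpleGraph V) (v : V) : Prop :=
  ∃ u w, u ≠ w ∧ G.Adj v u ∧ G.Adj v w ∧ IsLeaf G u ∧ IsLeaf G w

def Is2Packing (G : SimpleGraph V) (S : Set V) : Prop :=
  ∀ u ∈ S, ∀ v ∈ S, u ≠ v → 3 ≤ G.dist u v

noncomputable def packingNumber (G : SimpleGraph V) [Fintype V] : ℕ :=
  sSup {n | ∃ S : Finset V, S.card = n ∧ Is2Packing G ↑S}

def IsPendantEdge (G : SimpleGraph V) (e : Sym2 V) : Prop :=
  ∃ u v, e = s(u, v) ∧ G.Adj u v ∧ IsLeaf G u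

/-- Distance between two edges. -/
noncomputable def edgeDist (G : SimpleGraph V) (e f : Sym2 V) : ℕ :=
  sInf {n | ∃ u ∈ e, ∃ v ∈ f, G.dist u v = n}

/-- Distance from an edge to a set of edges. -/
noncomputable def edistToSet (G : SimpleGraph V) (e : Sym2 V) (F : Set (Sym2 V)) : ℕ :=
  sInf {n | ∃ f ∈ F, edgeDist G e f = n}

/-- Properties (a), (b), (c) of an edge set `F` in `T`. -/
def PropertyABC (T : SimpleGraph V) (F : Set (Sym2 V)) : Prop :=
  (∀ e, IsPendantEdge T e → e ∈ F) ∧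
  (∀ e ∈ F, edistToSet T e (F \ {e}) = 3) ∧
  (∀ e ∈ F, ∀ f ∈ F, e ≠ f →
    ∃! l : List (Sym2 V),
      l.head? = some e ∧ l.getLast? = some f ∧ (∀ x ∈ l, x ∈ F) ∧
      l.Chain' (fun a b => edgeDist T a b = 3))

/-!
In a graph of maximum degree two, a total dominating set `S` dominates at most `2 * #S` vertices,
counted with multiplicity. So `m ≤ 2 * #S` on `m` vertices, and equality forces every vertex to
have exactly one neighbour in `S`; then `S` induces a perfect matching and `#S` is even. Together
with the vertices `≡ 1, 2 (mod 4)` this gives `γₜ(Pₘ) = ⌊m/2⌋ + ⌈m/4⌉ - ⌊m/4⌋`. Subdividing `k`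
edges of `Pₙ` gives `Pₙ₊ₖ`: place vertex `i` at `2i` and the vertex subdividing `{i, i+1}` at
`2i + 1`, and the edges join consecutive positions. Hence `sd_γₜ(Pₙ)` is the least `k` with
`γₜ(Pₙ₊ₖ) > γₜ(Pₙ)`, and that is `3` exactly when `n ≡ 2 (mod 4)`.
-/

open Finset

section TotalDomination

variable {V W : Type*} {G : SimpleGraph V} {H : SimpleGraph W}

lemma IsTotalDomSet.map_iso {S : Finset V} (hS : IsTotalDomSet G ↑S) (e : G ≃g H) :
    IsTotalDomSet H ↑(S.map e.toEquiv.toEmbedding) := by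
  intro w
  obtain ⟨u, hu, hwu⟩ := hS (e.symm w)
  exact ⟨e u, mem_map_of_mem _ hu, by simpa using e.map_adj_iff.2 hwu⟩

lemma gammaT_congr [Fintype V] [Fintype W] (e : G ≃g H) : gammaT G = gammaT H := by
  unfold gammaT
  congr 1
  ext k
  constructor
  · rintro ⟨S, rfl, hS⟩
    exact ⟨_, card_map _, hS.map_iso e⟩
  · rintro ⟨S, rfl, hS⟩
    exact ⟨_, card_map _, hS.map_iso e.symm⟩

lemma gammaT_le_card [Fintype V] {S : Finset V} (hS : IsTotalDomSet G ↑S) :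
    gammaT G ≤ S.card :=
  Nat.sInf_le ⟨S, rfl, hS⟩

lemma exists_isTotalDomSet_card_eq_gammaT [Fintype V] {S₀ : Finset V}
    (hS₀ : IsTotalDomSet G ↑S₀) : ∃ S : Finset V, IsTotalDomSet G ↑S ∧ S.card = gammaT G := by
  have hne : ∃ k, ∃ S : Finset V, S.card = k ∧ IsTotalDomSet G ↑S := ⟨_, S₀, rfl, hS₀⟩
  obtain ⟨S, hcard, hS⟩ := Nat.sInf_mem hne
  exact ⟨S, hS, hcard⟩

variable [Fintype V] [DecidableRel G.Adj]

lemma sum_card_filter_adj_eq_sum_degree (S : Finset V) :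
    ∑ v, #(S.filter (G.Adj v)) = ∑ u ∈ S, G.degree u := by
  have := sum_card_bipartiteAbove_eq_sum_card_bipartiteBelow (s := univ) (t := S) (r := G.Adj)
  simpa [bipartiteAbove, bipartiteBelow, ← card_neighborFinset_eq_degree,
    neighborFinset_eq_filter, adj_comm] using this

lemma IsTotalDomSet.card_le_sum_degree {S : Finset V} (hS : IsTotalDomSet G ↑S) :
    Fintype.card V ≤ ∑ u ∈ S, G.degree u := by
  rw [← sum_card_filter_adj_eq_sum_degree, Fintype.card_eq_sum_ones]
  refine sum_le_sum fun v _ => card_pos.2 ?_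
  obtain ⟨u, hu, hvu⟩ := hS v
  exact ⟨u, mem_filter.2 ⟨hu, hvu⟩⟩

lemma IsTotalDomSet.even_card_of_sum_degree_eq {S : Finset V} (hS : IsTotalDomSet G ↑S)
    (h : ∑ u ∈ S, G.degree u = Fintype.card V) : Even S.card := by
  have hone : ∀ v, #(S.filter (G.Adj v)) = 1 := by
    rw [← sum_card_filter_adj_eq_sum_degree, Fintype.card_eq_sum_ones] at h
    have hle : ∀ v ∈ univ, 1 ≤ #(S.filter (G.Adj v)) := fun v _ => by
      obtain ⟨u, hu, hvu⟩ := hS v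
      exact card_pos.2 ⟨u, mem_filter.2 ⟨hu, hvu⟩⟩
    exact fun v => ((sum_eq_sum_iff_of_le hle).1 h.symm v (mem_univ v)).symm
  classical
  have hdeg : ∀ u : (S : Set V), (G.induce (S : Set V)).degree u = 1 := fun u => by
    rw [← card_neighborFinset_eq_degree, ← hone u, ← card_map (.subtype (· ∈ (S : Set V)))]
    congr 1
    ext w
    simp [and_comm]
  have := (G.induce (S : Set V)).even_card_odd_degree_vertices
  simpa [hdeg] using this

lemma IsTotalDomSet.card_le_two_mul (hG : ∀ v, G.degree v ≤ 2) {S : Finset V}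
    (hS : IsTotalDomSet G ↑S) : Fintype.card V ≤ 2 * S.card :=
  hS.card_le_sum_degree.trans <| by simpa [mul_comm] using sum_le_card_nsmul S _ 2 fun v _ => hG v

lemma IsTotalDomSet.even_card_of_card_eq_two_mul (hG : ∀ v, G.degree v ≤ 2) {S : Finset V}
    (hS : IsTotalDomSet G ↑S) (h : Fintype.card V = 2 * S.card) : Even S.card := by
  refine hS.even_card_of_sum_degree_eq (le_antisymm ?_ hS.card_le_sum_degree)
  simpa [h, mul_comm] using sum_le_card_nsmul S _ 2 fun v _ => hG v

end TotalDomination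

instance (m : ℕ) : DecidableRel (pathGraph m).Adj :=
  fun _ _ => decidable_of_iff _ pathGraph_adj.symm

lemma degree_pathGraph_le_two {m : ℕ} (v : Fin m) : (pathGraph m).degree v ≤ 2 := by
  rw [← card_neighborFinset_eq_degree, ← card_image_of_injective _ Fin.val_injective]
  calc _ ≤ #({v.val - 1, v.val + 1} : Finset ℕ) := by
        refine card_le_card fun i hi => ?_
        simp only [mem_image, mem_neighborFinset, pathGraph_adj] at hi
        simp only [mem_insert, mem_singleton]
        omega
    _ ≤ 2 := card_le_two

def pathTotalDomNum (m : ℕ) : ℕ := m / 2 + (m + 3) / 4 - m / 4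

lemma pathTotalDomNum_le_card {m : ℕ} {S : Finset (Fin m)} (hS : IsTotalDomSet (pathGraph m) ↑S) :
    pathTotalDomNum m ≤ S.card := by
  have hle := hS.card_le_two_mul degree_pathGraph_le_two
  have heven := hS.even_card_of_card_eq_two_mul degree_pathGraph_le_two
  rw [Fintype.card_fin] at hle heven
  rw [pathTotalDomNum]
  rcases hle.eq_or_lt with h | h
  · have := Nat.even_iff.1 (heven h)
    omega
  · omega

lemma card_filter_range_mod_four (m : ℕ) :
    #((range m).filter (fun i => i % 4 = 1 ∨ i % 4 = 2)) = (m + 2) / 4 + (m + 1) / 4 := by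
  induction m with
  | zero => rfl
  | succ m ih =>
    rw [range_add_one, filter_insert]
    split_ifs with h
    · rw [card_insert_of_notMem (by simp), ih]
      omega
    · rw [ih]
      omega

lemma exists_isTotalDomSet_pathGraph {m : ℕ} (hm : 2 ≤ m) :
    ∃ S : Finset (Fin m), IsTotalDomSet (pathGraph m) ↑S ∧ S.card ≤ pathTotalDomNum m := by
  -- the vertices `i ≡ 1, 2 (mod 4)`, plus `m - 2` to dominate the last vertex
  set D := insert (m - 2) ((range m).filter (fun i => i % 4 = 1 ∨ i % 4 = 2))
  have hD : ∀ i ∈ D, i < m := by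
    intro i hi
    simp only [D, mem_insert, mem_filter, mem_range] at hi
    omega
  refine ⟨D.attachFin hD, fun v => ?_, ?_⟩
  · have : ∃ u ∈ D, v.val + 1 = u ∨ u + 1 = v.val := by
      simp only [D, mem_insert, mem_filter, mem_range]
      by_cases hv : v.val % 4 = 0 ∨ v.val % 4 = 1
      · by_cases hlast : v.val + 1 < m
        · exact ⟨v.val + 1, by omega, by omega⟩
        · exact ⟨m - 2, by omega, by omega⟩
      · exact ⟨v.val - 1, by omega, by omega⟩
    obtain ⟨u, hu, hvu⟩ := this
    exact ⟨⟨u, hD u hu⟩, by simpa using hu, pathGraph_adj.2 hvu⟩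
  · rw [card_attachFin, pathTotalDomNum]
    by_cases hmod : m % 4 = 0 ∨ m % 4 = 3
    · rw [card_insert_of_mem (by simp; omega), card_filter_range_mod_four]
      omega
    · have : #D ≤ (m + 2) / 4 + (m + 1) / 4 + 1 :=
        card_filter_range_mod_four m ▸ card_insert_le _ _
      omega

lemma gammaT_pathGraph {m : ℕ} (hm : 2 ≤ m) : gammaT (pathGraph m) = pathTotalDomNum m := by
  obtain ⟨S₀, hS₀, hcard₀⟩ := exists_isTotalDomSet_pathGraph hm
  obtain ⟨S, hS, hcard⟩ := exists_isTotalDomSet_card_eq_gammaT hS₀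
  exact le_antisymm ((gammaT_le_card hS₀).trans hcard₀) (hcard ▸ pathTotalDomNum_le_card hS)

lemma nonempty_iso_pathGraph_of_injective {V α : Type*} [Fintype V] [LinearOrder α]
    {G : SimpleGraph V} {f : V → α} (hf : Function.Injective f)
    (hG : ∀ x y, f x < f y → (G.Adj x y ↔ ∀ z, f z ≤ f x ∨ f y ≤ f z)) :
    Nonempty (G ≃g pathGraph (Fintype.card V)) := by
  let _ : LinearOrder V := LinearOrder.lift' f hf
  have hcov : ∀ x y, x ⋖ y ↔ f x < f y ∧ ∀ z, f z ≤ f x ∨ f y ≤ f z := fun x y =>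
    and_congr Iff.rfl ⟨fun h z => (le_or_gt (f z) (f x)).imp_right fun hxz => not_lt.1 (h hxz),
      fun h z hxz hzy => (h z).elim (fun h' => h'.not_gt hxz) fun h' => h'.not_gt hzy⟩
  let e : V ≃o Fin (Fintype.card V) := (Fintype.orderIsoFinOfCardEq V rfl).symm
  refine ⟨⟨e.toEquiv, fun {x y} => ?_⟩⟩
  change (hasse _).Adj (e x) (e y) ↔ _
  rw [hasse_adj, apply_covBy_apply_iff, apply_covBy_apply_iff, hcov, hcov]
  rcases lt_trichotomy (f x) (f y) with h | h | h
  · simp [h, h.not_gt, hG x y h]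
  · simp [hf h]
  · simp [h, h.not_gt, hG y x h, G.adj_comm x y]

section PathEdges

variable {n : ℕ} {e : Sym2 (Fin n)}

lemma mem_iff_of_mem_edgeSet_pathGraph (he : e ∈ (pathGraph n).edgeSet) (u : Fin n) :
    u ∈ e ↔ u.val = e.inf.val ∨ u.val = e.inf.val + 1 := by
  induction e using Sym2.ind with
  | _ a b =>
    rw [mem_edgeSet, pathGraph_adj] at he
    simp only [Sym2.mem_iff, Sym2.inf_mk, Fin.ext_iff, Fin.coe_min]
    omega

lemma inf_add_one_lt_of_mem_edgeSet_pathGraph (he : e ∈ (pathGraph n).edgeSet) :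
    e.inf.val + 1 < n := by
  induction e using Sym2.ind with
  | _ a b =>
    rw [mem_edgeSet, pathGraph_adj] at he
    simp only [Sym2.inf_mk, Fin.coe_min]
    omega

lemma injOn_inf_edgeSet_pathGraph : Set.InjOn Sym2.inf (pathGraph n).edgeSet :=
  fun _ he _ hf h => Sym2.ext fun u => by
    rw [mem_iff_of_mem_edgeSet_pathGraph he, mem_iff_of_mem_edgeSet_pathGraph hf, h]

lemma card_le_of_subset_edgeSet_pathGraph {F : Finset (Sym2 (Fin n))}
    (hF : ↑F ⊆ (pathGraph n).edgeSet) : F.card ≤ n - 1 := by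
  simpa using card_le_card_of_injOn (fun e => e.inf.val) (t := range (n - 1))
    (fun e he => mem_range.2 <| Nat.lt_sub_of_add_lt <|
      inf_add_one_lt_of_mem_edgeSet_pathGraph (hF he))
    fun e he f hf h => injOn_inf_edgeSet_pathGraph (hF he) (hF hf) (Fin.ext h)

lemma exists_subset_edgeSet_pathGraph_card_eq {k : ℕ} (hk : k < n) :
    ∃ F : Finset (Sym2 (Fin n)), ↑F ⊆ (pathGraph n).edgeSet ∧ F.card = k := by
  let edge (i : Fin k) : Sym2 (Fin n) := s(⟨i, by omega⟩, ⟨i + 1, by omega⟩)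
  have hinf (i : Fin k) : (edge i).inf.val = i := by simp [edge]
  refine ⟨univ.image edge, ?_, ?_⟩
  · intro e he
    obtain ⟨i, -, rfl⟩ := mem_image.1 he
    simp [edge, pathGraph_adj]
  · rw [card_image_of_injective _ fun i j h => Fin.ext (by rw [← hinf i, ← hinf j, h]),
      card_univ, Fintype.card_fin]

end PathEdges

section Subdivision

variable {n : ℕ} {F : Finset (Sym2 (Fin n))}

def subdivisionPosition (F : Finset (Sym2 (Fin n))) : Fin n ⊕ {e // e ∈ F} → ℕ
  | .inl v => 2 * v.val
  | .inr e => 2 * e.1.inf.val + 1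

lemma subdivisionPosition_injective (hF : ↑F ⊆ (pathGraph n).edgeSet) :
    Function.Injective (subdivisionPosition F) := by
  rintro (u | e) (v | f) h <;> simp only [subdivisionPosition] at h
  · exact congrArg Sum.inl (Fin.ext (by omega))
  · omega
  · omega
  · exact congrArg Sum.inr (Subtype.ext (injOn_inf_edgeSet_pathGraph (hF e.2) (hF f.2)
      (Fin.ext (by omega))))

lemma subdivide_pathGraph_adj_iff (hF : ↑F ⊆ (pathGraph n).edgeSet)
    (x y : Fin n ⊕ {e // e ∈ F}) (hxy : subdivisionPosition F x < subdivisionPosition F y) :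
    (subdivide (pathGraph n) F).Adj x y ↔ ∀ z,
      subdivisionPosition F z ≤ subdivisionPosition F x ∨
        subdivisionPosition F y ≤ subdivisionPosition F z := by
  have hlt : ∀ e ∈ F, e.inf.val + 1 < n := fun e he =>
    inf_add_one_lt_of_mem_edgeSet_pathGraph (hF he)
  rcases x with u | e <;> rcases y with v | f <;>
    simp only [subdivisionPosition] at hxy <;>
    simp only [subdivide, Sum.forall, subdivisionPosition]
  · constructor
    · rintro ⟨hadj, huvF⟩
      have huv := pathGraph_adj.1 hadj
      refine ⟨fun w => by omega, fun g => ?_⟩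
      have : g.1.inf ≠ u := fun h => by
        have : s(u, v) = g.1 := injOn_inf_edgeSet_pathGraph hadj (hF g.2) <| by
          rw [h, Sym2.inf_mk, inf_of_le_left (Fin.le_iff_val_le_val.2 (by omega))]
        exact huvF (this ▸ g.2)
      omega
    · rintro ⟨hw, hg⟩
      have huv : u.val + 1 = v.val := by
        have : 2 * (u.val + 1) ≤ 2 * u.val ∨ 2 * v.val ≤ 2 * (u.val + 1) :=
          hw ⟨u + 1, by omega⟩
        omega
      refine ⟨pathGraph_adj.2 (.inl huv), fun huvF => ?_⟩
      have := hg ⟨s(u, v), huvF⟩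
      simp only [Sym2.inf_mk, Fin.coe_min] at this
      omega
  · rw [mem_iff_of_mem_edgeSet_pathGraph (hF f.2)]
    refine ⟨fun h => ⟨fun w => by omega, fun g => by omega⟩, fun ⟨hw, _⟩ => ?_⟩
    have : 2 * f.1.inf.val ≤ 2 * u.val ∨ 2 * f.1.inf.val + 1 ≤ 2 * f.1.inf.val :=
      hw ⟨f.1.inf, by have := hlt f f.2; omega⟩
    omega
  · rw [mem_iff_of_mem_edgeSet_pathGraph (hF e.2)]
    refine ⟨fun h => ⟨fun w => by omega, fun g => by omega⟩, fun ⟨hw, _⟩ => ?_⟩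
    have : 2 * (e.1.inf.val + 1) ≤ 2 * e.1.inf.val + 1 ∨ 2 * v.val ≤ 2 * (e.1.inf.val + 1) :=
      hw ⟨e.1.inf + 1, hlt e e.2⟩
    omega
  · refine iff_of_false id fun ⟨hw, _⟩ => ?_
    have : 2 * (e.1.inf.val + 1) ≤ 2 * e.1.inf.val + 1 ∨
        2 * f.1.inf.val + 1 ≤ 2 * (e.1.inf.val + 1) :=
      hw ⟨e.1.inf + 1, hlt e e.2⟩
    omega

end Subdivision

lemma nonempty_iso_subdivide_pathGraph {n : ℕ} {F : Finset (Sym2 (Fin n))}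
    (hF : ↑F ⊆ (pathGraph n).edgeSet) :
    Nonempty (subdivide (pathGraph n) F ≃g pathGraph (n + F.card)) := by
  have h := nonempty_iso_pathGraph_of_injective (subdivisionPosition_injective hF)
    (subdivide_pathGraph_adj_iff hF)
  rwa [Fintype.card_sum, Fintype.card_fin, Fintype.card_coe] at h

lemma sdGammaT_pathGraph {n : ℕ} (hn : 2 ≤ n) :
    sdGammaT (pathGraph n) =
      sInf {k | k < n ∧ pathTotalDomNum n < pathTotalDomNum (n + k)} := by
  unfold sdGammaT
  congr 1
  ext k
  simp only [Set.mem_ofPred_eq, gammaT_pathGraph hn]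
  constructor
  · rintro ⟨F, hF, rfl, hlt⟩
    obtain ⟨e⟩ := nonempty_iso_subdivide_pathGraph hF
    rw [gammaT_congr e, gammaT_pathGraph (by omega)] at hlt
    exact ⟨by have := card_le_of_subset_edgeSet_pathGraph hF; omega, hlt⟩
  · rintro ⟨hk, hlt⟩
    obtain ⟨F, hF, rfl⟩ := exists_subset_edgeSet_pathGraph_card_eq hk
    obtain ⟨e⟩ := nonempty_iso_subdivide_pathGraph hF
    exact ⟨F, hF, rfl, by rwa [gammaT_congr e, gammaT_pathGraph (by omega)]⟩

/-- A path `P_n` on `n ≥ 6` vertices has total domination subdivision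
number `3` iff `n ≡ 2 (mod 4)`. -/
theorem path_class3_iff (n : ℕ) (hn : 6 ≤ n) :
    sdGammaT (SimpleGraph.pathGraph n) = 3 ↔ n % 4 = 2 := by
  rw [sdGammaT_pathGraph (by omega)]
  set S := {k | k < n ∧ pathTotalDomNum n < pathTotalDomNum (n + k)}
  by_cases hmod : n % 4 = 2
  · have h3 : 3 ∈ S := ⟨by omega, by unfold pathTotalDomNum; omega⟩
    refine iff_of_true (le_antisymm (Nat.sInf_le h3) (le_csInf ⟨3, h3⟩ ?_)) hmod
    rintro k ⟨-, hk⟩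
    unfold pathTotalDomNum at hk
    omega
  · have h2 : 2 ∈ S := ⟨by omega, by unfold pathTotalDomNum; omega⟩
    have := Nat.sInf_le h2
    omega
end

section
/- Let T be a tree of order at least 6 in which the set S' of weak support vertices is a maximum 2-packing. Then T has no strong support vertex. -/
open SimpleGraph

variable {V : Type*}

/-!
A strong support vertex `v` with leaves `u ≠ w` is neither a leaf nor a weak support vertex, and
`u` is not a weak support vertex either. If no weak support vertex is adjacent to `v`, the leaf `u`
is at distance at least `3` from every weak support vertex and can be added to the packing. If a
weak support vertex `s` with leaf `l` is adjacent to `v`, then removing `s` and adding both `u` and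
`l` gives a larger `2`-packing.
-/

section

variable {V : Type*} {G : SimpleGraph V} {S : Set V} {u v w l s x : V}

theorem IsLeaf.eq_of_adj (hu : IsLeaf G u) (huv : G.Adj u v) (huw : G.Adj u w) : w = v := by
  obtain ⟨z, -, hz⟩ := hu
  rw [hz w huw, hz v huv]

theorem not_isLeaf_of_adj_of_adj (hv : G.Adj v u) (hw : G.Adj v w) (huw : u ≠ w) :
    ¬ IsLeaf G v :=
  fun hleaf => huw (hleaf.eq_of_adj hw hv)

theorem IsLeaf.not_isWeakSupport (hu : IsLeaf G u) (huv : G.Adj u v) (hv : ¬ IsLeaf G v) :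
    ¬ IsWeakSupport G u := by
  rintro ⟨z, ⟨huz, hz⟩, -⟩
  exact hv (hu.eq_of_adj huv huz ▸ hz)

theorem IsStrongSupport.not_isLeaf (hv : IsStrongSupport G v) : ¬ IsLeaf G v := by
  obtain ⟨u, w, huw, hvu, hvw, -, -⟩ := hv
  exact not_isLeaf_of_adj_of_adj hvu hvw huw

theorem IsStrongSupport.not_isWeakSupport (hv : IsStrongSupport G v) : ¬ IsWeakSupport G v := by
  obtain ⟨u, w, huw, hvu, hvw, hu, hw⟩ := hv
  rintro ⟨z, -, hz⟩
  exact huw ((hz u ⟨hvu, hu⟩).trans (hz w ⟨hvw, hw⟩).symm)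

/-- Every walk leaving the leaf `u` passes through its neighbour `v` first. -/
theorem IsLeaf.dist_eq_dist_add_one (hG : G.Connected) (hu : IsLeaf G u) (huv : G.Adj u v)
    (hx : x ≠ u) : G.dist u x = G.dist v x + 1 := by
  refine le_antisymm ?_ ?_
  · calc G.dist u x ≤ G.dist u v + G.dist v x := hG.dist_triangle
      _ = G.dist v x + 1 := by rw [dist_eq_one_iff_adj.mpr huv, add_comm]
  · obtain ⟨p, hp⟩ := (hG u x).exists_walk_length_eq_dist
    cases p with
    | nil => exact absurd rfl hx
    | cons h q =>
      obtain rfl := hu.eq_of_adj huv h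
      rw [← hp, Walk.length_cons]
      exact Nat.add_le_add_right (dist_le q) 1

theorem Is2Packing.mono {S' : Set V} (hS : Is2Packing G S) (h : S' ⊆ S) : Is2Packing G S' :=
  fun a ha b hb hab => hS a (h ha) b (h hb) hab

theorem Is2Packing.not_adj (hS : Is2Packing G S) (hu : u ∈ S) (hv : v ∈ S) : ¬ G.Adj u v := by
  intro huv
  have := hS u hu v hv huv.ne
  rw [dist_eq_one_iff_adj.mpr huv] at this
  omega

theorem Is2Packing.insert_of_three_le_dist (hS : Is2Packing G S)
    (hu : ∀ x ∈ S, x ≠ u → 3 ≤ G.dist u x) :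
    Is2Packing G (insert u S) := by
  rintro a (rfl | ha) b (rfl | hb) hab
  · exact absurd rfl hab
  · exact hu b hb hab.symm
  · exact dist_comm ▸ hu a ha hab
  · exact hS a ha b hb hab

theorem Is2Packing.insert_leaf (hG : G.Connected) (hS : Is2Packing G S) (hu : IsLeaf G u)
    (huv : G.Adj u v) (hvS : v ∉ S) (hNS : ∀ x ∈ S, ¬ G.Adj v x) :
    Is2Packing G (insert u S) := by
  refine hS.insert_of_three_le_dist fun x hx hxu => ?_
  have := hG.one_lt_dist_of_ne_of_not_adj (ne_of_mem_of_not_mem hx hvS).symm (hNS x hx)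
  rw [hu.dist_eq_dist_add_one hG huv hxu]
  omega

theorem Is2Packing.swap_leaves (hG : G.Connected) (hS : Is2Packing G S) (hs : s ∈ S)
    (hl : IsLeaf G l) (hls : G.Adj l s) (hu : IsLeaf G u) (huv : G.Adj u v) (hvs : G.Adj v s)
    (huS : u ∉ S) : Is2Packing G (insert l (insert u (S \ {s}))) := by
  have hus : u ≠ s := ne_of_mem_of_not_mem hs huS |>.symm
  have hdist_u : ∀ x ∈ S \ {s}, 3 ≤ G.dist u x := by
    rintro x ⟨hx, hxs⟩
    have h3 := hS s hs x hx (Ne.symm hxs)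
    have htri : G.dist s x ≤ G.dist s v + G.dist v x := hG.dist_triangle
    rw [dist_eq_one_iff_adj.mpr hvs.symm] at htri
    rw [hu.dist_eq_dist_add_one hG huv (ne_of_mem_of_not_mem hx huS)]
    omega
  have hSs : Is2Packing G (S \ {s}) := hS.mono Set.sdiff_subset
  refine (hSs.insert_of_three_le_dist fun x hx _ => hdist_u x hx).insert_of_three_le_dist ?_
  rintro x (rfl | ⟨hx, hxs⟩) hxl
  · rw [hl.dist_eq_dist_add_one hG hls hxl, dist_comm, hu.dist_eq_dist_add_one hG huv hus.symm,
      dist_eq_one_iff_adj.mpr hvs]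
  · rw [hl.dist_eq_dist_add_one hG hls hxl]
    have := hS s hs x hx (Ne.symm hxs)
    omega

theorem exists_ncard_lt_of_isStrongSupport [Finite V] (hG : G.Connected)
    (hpack : Is2Packing G {v | IsWeakSupport G v}) (hv : IsStrongSupport G v) :
    ∃ S, Is2Packing G S ∧ {v | IsWeakSupport G v}.ncard < S.ncard := by
  set W := {v | IsWeakSupport G v}
  obtain ⟨u, -, -, hvu, -, hu, -⟩ := id hv
  have huW : u ∉ W := hu.not_isWeakSupport hvu.symm hv.not_isLeaf
  by_cases hA : ∃ s ∈ W, G.Adj v s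
  · obtain ⟨s, hs, hvs⟩ := hA
    obtain ⟨l, ⟨hsl, hl⟩, -⟩ := id hs
    have hlW : l ∉ W := fun hlW => hpack.not_adj hs hlW hsl
    have hlu : l ∉ insert u (W \ {s}) := by
      rintro (rfl | ⟨hlW', -⟩)
      · exact hvs.ne (hl.eq_of_adj hsl.symm hvu.symm)
      · exact hlW hlW'
    refine ⟨_, hpack.swap_leaves hG hs hl hsl.symm hu hvu.symm hvs huW, ?_⟩
    rw [Set.ncard_insert_of_notMem hlu, Set.ncard_insert_of_notMem fun h => huW h.1,
      ← Set.ncard_sdiff_singleton_add_one hs]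
    omega
  · push Not at hA
    exact ⟨_, hpack.insert_leaf hG hu hvu.symm hv.not_isWeakSupport hA,
      by rw [Set.ncard_insert_of_notMem huW]; omega⟩

end

theorem max_packing_no_strong_support_general {V : Type*} [Fintype V]
    (T : SimpleGraph V) (hT : T.IsTree)
    (hpack : Is2Packing T {v | IsWeakSupport T v})
    (hmax : ∀ S : Set V, Is2Packing T S → S.ncard ≤ {v | IsWeakSupport T v}.ncard) :
    ¬ ∃ v : V, IsStrongSupport T v := by
  rintro ⟨v, hv⟩
  obtain ⟨S, hS, hlt⟩ := exists_ncard_lt_of_isStrongSupport hT.connected hpack hv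
  exact (hmax S hS).not_gt hlt

/-- If the set of weak support vertices of a tree of order at least `6`
is a maximum `2`-packing, then the tree has no strong support vertex. -/
theorem max_packing_no_strong_support {V : Type*} [Fintype V]
    (T : SimpleGraph V) (hT : T.IsTree) (h6 : 6 ≤ Fintype.card V)
    (hpack : Is2Packing T {v | IsWeakSupport T v})
    (hmax : ∀ S : Set V, Is2Packing T S → S.ncard ≤ {v | IsWeakSupport T v}.ncard) :
    ¬ ∃ v : V, IsStrongSupport T v :=
  max_packing_no_strong_support_general T hT hpack hmax
end

section
/- Let T be a tree of order at least 6 in which the set S' of weak support vertices is a maximum 2-packing. Then for every x ∈ S', the minimum distance in T from x to S' \ {x} is exactly 3. -/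
open SimpleGraph

variable {V : Type*}

/-!
Suppose some `x ∈ S'` had no other weak support vertex at distance `3`; then all of them are at
distance at least `4` from `x`, so a vertex `b` at distance `2` from `x` is at distance at least
`2` from every vertex of `S'`. A pendant leaf is one step farther than its support vertex from
every other vertex, so moving each vertex of `S'` within distance `2` of `b` onto its leaf keeps a
`2`-packing, which is now at distance at least `3` from `b`. Adding `b` gives a larger `2`-packing.
-/

section Packing

variable {G : SimpleGraph V}

lemma exists_adj_ne_of_not_isLeaf {v u : V} (hvu : G.Adj v u) (hv : ¬IsLeaf G v) :
    ∃ w, G.Adj v w ∧ w ≠ u := by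
  by_contra! h
  exact hv ⟨u, hvu, h⟩

lemma IsWeakSupport.isSupport {v : V} (hv : IsWeakSupport G v) : IsSupport G v :=
  let ⟨u, hu, _⟩ := hv
  ⟨u, hu⟩

lemma card_le_two_of_adj_of_isLeaf [Fintype V] (hG : G.Connected) {u v : V} (huv : G.Adj u v)
    (hu : IsLeaf G u) (hv : IsLeaf G v) : Fintype.card V ≤ 2 := by
  classical
  have hmem : ∀ w, G.Walk w u → w = u ∨ w = v := by
    intro w p
    induction p with
    | nil => exact .inl rfl
    | cons h _ ih =>
      rcases ih huv hu with rfl | rfl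
      · exact .inr (hu.unique h.symm huv)
      · exact .inl (hv.unique h.symm huv.symm)
  calc Fintype.card V = (Finset.univ : Finset V).card := rfl
    _ ≤ ({u, v} : Finset V).card := Finset.card_le_card fun w _ => by
      rcases hmem w (hG w u).some with rfl | rfl <;> simp
    _ ≤ 2 := Finset.card_le_two

lemma SimpleGraph.IsAcyclic.dist_eq_two (hG : G.IsAcyclic) {x w u : V} (hxw : G.Adj x w)
    (hwu : G.Adj w u) (hxu : x ≠ u) : G.dist x u = 2 := by
  classical
  have hnadj : ¬G.Adj x u := fun hxu' =>
    hG.cliqueFree le_rfl {x, w, u} (is3Clique_triple_iff.2 ⟨hxw, hxu', hwu⟩)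
  have hreach : G.Reachable x u := hxw.reachable.trans hwu.reachable
  have hle : G.dist x u ≤ 2 := dist_le (.cons hxw (.cons hwu .nil))
  have hlt := hreach.one_lt_dist_of_ne_of_not_adj hxu hnadj
  omega

lemma exists_dist_eq_two_of_isWeakSupport [Fintype V] (hT : G.IsTree)
    (hcard : 3 ≤ Fintype.card V) {x : V} (hx : IsWeakSupport G x) : ∃ b, G.dist x b = 2 := by
  obtain ⟨z, ⟨hxz, hz⟩, hz_unique⟩ := hx
  have hx_not_leaf : ¬IsLeaf G x := fun hxl => by
    have := card_le_two_of_adj_of_isLeaf hT.connected hxz hxl hz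
    omega
  obtain ⟨w, hxw, hwz⟩ := exists_adj_ne_of_not_isLeaf hxz hx_not_leaf
  have hw_not_leaf : ¬IsLeaf G w := fun hwl => hwz (hz_unique w ⟨hxw, hwl⟩)
  obtain ⟨u, hwu, hux⟩ := exists_adj_ne_of_not_isLeaf hxw.symm hw_not_leaf
  exact ⟨u, hT.isAcyclic.dist_eq_two hxw hwu hux.symm⟩

lemma IsLeaf.dist_eq_dist_add_one_s4 (hG : G.Connected) {l y : V} (hl : IsLeaf G l)
    (hly : G.Adj l y) {z : V} (hz : z ≠ l) : G.dist z l = G.dist z y + 1 := by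
  rw [dist_comm, dist_comm (u := z)]
  obtain ⟨p, hp⟩ := hG.exists_walk_length_eq_dist l z
  cases p with
  | nil => exact absurd rfl hz
  | cons h q =>
    have hq : G.dist y z ≤ q.length := hl.unique h hly ▸ dist_le q
    have htri := hG.dist_triangle (u := l) (v := y) (w := z)
    rw [dist_eq_one_iff_adj.2 hly] at htri
    simp only [Walk.length_cons] at hp
    omega

lemma Is2Packing.notMem_of_adj {S : Set V} (hS : Is2Packing G S) {y u : V} (hy : y ∈ S)
    (hyu : G.Adj y u) : u ∉ S := fun hu => by
  have := hS y hy u hu hyu.ne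
  rw [dist_eq_one_iff_adj.2 hyu] at this
  omega

lemma Is2Packing.insert_of_three_le_dist_s4 {S : Set V} (hS : Is2Packing G S) {b : V}
    (hb : ∀ v ∈ S, 3 ≤ G.dist b v) : Is2Packing G (insert b S) := by
  rintro u (rfl | hu) v (rfl | hv) huv
  · exact absurd rfl huv
  · exact hb v hv
  · rw [dist_comm]
    exact hb u hu
  · exact hS u hu v hv huv

lemma Is2Packing.three_le_dist_of_pendant (hG : G.Connected) {S : Set V} (hS : Is2Packing G S)
    {y y' u u' : V} (hy : y ∈ S) (hy' : y' ∈ S) (hne : y ≠ y')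
    (hu : u = y ∨ G.Adj y u ∧ IsLeaf G u) (hu' : u' = y' ∨ G.Adj y' u' ∧ IsLeaf G u') :
    3 ≤ G.dist u u' := by
  have dist_le_of_pendant : ∀ {y u z : V}, (u = y ∨ G.Adj y u ∧ IsLeaf G u) → z ≠ u →
      G.dist z y ≤ G.dist z u := by
    rintro y u z (rfl | ⟨hyu, hu⟩) hz
    · exact le_rfl
    · rw [hu.dist_eq_dist_add_one_s4 hG hyu.symm hz]
      omega
  have ne_of_pendant : ∀ {y y' u : V}, y ∈ S → y' ∈ S → y ≠ y' →
      (u = y ∨ G.Adj y u ∧ IsLeaf G u) → u ≠ y' := by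
    rintro y y' u hy hy' hne (rfl | ⟨hyu, -⟩) rfl
    exacts [hne rfl, hS.notMem_of_adj hy hyu hy']
  have huu' : u ≠ u' := by
    rintro rfl
    rcases hu' with rfl | ⟨hyu', hu'leaf⟩
    · exact ne_of_pendant hy hy' hne hu rfl
    · rcases hu with rfl | ⟨hyu, -⟩
      · exact hS.notMem_of_adj hy' hyu' hy
      · exact hne (hu'leaf.unique hyu.symm hyu'.symm)
  calc 3 ≤ G.dist y' y := hS y' hy' y hy hne.symm
    _ ≤ G.dist y' u := dist_le_of_pendant hu (ne_of_pendant hy hy' hne hu).symm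
    _ = G.dist u y' := dist_comm
    _ ≤ G.dist u u' := dist_le_of_pendant hu' huu'

lemma Is2Packing.exists_ncard_lt (hG : G.Connected) {S : Set V} (hfin : S.Finite)
    (hS : Is2Packing G S) (hsupp : ∀ y ∈ S, IsSupport G y) {b : V}
    (hb : ∀ y ∈ S, 2 ≤ G.dist b y) : ∃ S' : Set V, Is2Packing G S' ∧ S.ncard < S'.ncard := by
  classical
  choose! l hl using hsupp
  let f : V → V := fun y => if G.dist b y ≤ 2 then l y else y
  have hf : ∀ y ∈ S, f y = y ∨ G.Adj y (f y) ∧ IsLeaf G (f y) := fun y hy => by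
    by_cases h : G.dist b y ≤ 2
    · exact .inr (by simpa only [f, if_pos h] using hl y hy)
    · exact .inl (if_neg h)
  have hsep : ∀ y ∈ S, ∀ y' ∈ S, y ≠ y' → 3 ≤ G.dist (f y) (f y') := fun y hy y' hy' hne =>
    hS.three_le_dist_of_pendant hG hy hy' hne (hf y hy) (hf y' hy')
  have hb_far : ∀ v ∈ f '' S, 3 ≤ G.dist b v := by
    rintro _ ⟨y, hy, rfl⟩
    have hby := hb y hy
    by_cases h : G.dist b y ≤ 2
    · have hbl : b ≠ l y := by
        rintro rfl
        rw [dist_eq_one_iff_adj.2 (hl y hy).1.symm] at hby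
        omega
      simp only [f, if_pos h, (hl y hy).2.dist_eq_dist_add_one_s4 hG (hl y hy).1.symm hbl]
      omega
    · simp only [f, if_neg h]
      omega
  have hinj : Set.InjOn f S := fun y hy y' hy' hff => by
    by_contra hne
    simpa [hff] using hsep y hy y' hy' hne
  have hb_notMem : b ∉ f '' S := fun hmem => by simpa using hb_far b hmem
  have himage : Is2Packing G (f '' S) := by
    rintro _ ⟨y, hy, rfl⟩ _ ⟨y', hy', rfl⟩ hne
    exact hsep y hy y' hy' (ne_of_apply_ne f hne)
  refine ⟨insert b (f '' S), himage.insert_of_three_le_dist_s4 hb_far, ?_⟩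
  rw [Set.ncard_insert_of_notMem hb_notMem (hfin.image f), hinj.ncard_image]
  omega

end Packing

/-- If the set `S'` of weak support vertices of a tree of order at least `6`
is a maximum `2`-packing, then every `x ∈ S'` is at distance exactly `3` from `S' \ {x}`. -/
theorem max_packing_dist_three {V : Type*} [Fintype V]
    (T : SimpleGraph V) (hT : T.IsTree) (h6 : 6 ≤ Fintype.card V)
    (hpack : Is2Packing T {v | IsWeakSupport T v})
    (hmax : ∀ S : Set V, Is2Packing T S → S.ncard ≤ {v | IsWeakSupport T v}.ncard) :
    ∀ x : V, IsWeakSupport T x →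
      sInf {n | ∃ y : V, IsWeakSupport T y ∧ y ≠ x ∧ T.dist x y = n} = 3 := by
  intro x hx
  suffices ∃ y, IsWeakSupport T y ∧ y ≠ x ∧ T.dist x y = 3 by
    obtain ⟨y, hy, hyx, hxy⟩ := this
    refine IsLeast.csInf_eq ⟨⟨y, hy, hyx, hxy⟩, ?_⟩
    rintro n ⟨z, hz, hzx, rfl⟩
    exact hpack x hx z hz hzx.symm
  by_contra! hfar
  obtain ⟨b, hxb⟩ := exists_dist_eq_two_of_isWeakSupport hT (by omega) hx
  have hb : ∀ y ∈ {v | IsWeakSupport T v}, 2 ≤ T.dist b y := by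
    intro y hy
    rcases eq_or_ne y x with rfl | hyx
    · rw [dist_comm, hxb]
    · have h3 := hpack x hx y hy hyx.symm
      have hne := hfar y hy hyx
      have htri := hT.connected.dist_triangle (u := x) (v := b) (w := y)
      omega
  obtain ⟨S, hS, hlt⟩ :=
    hpack.exists_ncard_lt hT.connected (Set.toFinite _) (fun y hy => hy.isSupport) hb
  exact (hmax S hS).not_gt hlt
end

section
/- Let G be a connected graph of order at least 2, and let P = {P(v) : v ∈ V(G)} be a family where P(v) is a partition of N_G(v) for each v. Then in the 2-subdivision G(P), the vertex set V(G) is a maximum 2-packing of G(P), and ρ(G(P)) = |V(G)|. -/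
open SimpleGraph

variable {V : Type*}

/-- `Pf` is a partition of the finset `S`. -/
def IsFinsetPartitionOf {V : Type*} (Pf : Finset (Finset V)) (S : Finset V) : Prop :=
  (∀ A ∈ Pf, A.Nonempty) ∧ (∀ x, x ∈ S ↔ ∃ A ∈ Pf, x ∈ A) ∧
    ∀ A ∈ Pf, ∀ B ∈ Pf, A ≠ B → Disjoint A B

/-- The vertex type of the 2-subdivision `G(Pf)`: the original vertices, the pendant
leaves `(v,1)`, and the vertices `(v,A)` for `A ∈ Pf(v)`. -/
abbrev TwoSubVert (V : Type*) (P : V → Finset (Finset V)) : Type _ :=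
  V ⊕ (V ⊕ Σ v : V, {A : Finset V // A ∈ P v})

/-- The 2-subdivision `G(Pf)` of `G` with respect to the family of partitions `Pf`. -/
def twoSubdivision {V : Type*} (G : SimpleGraph V) (P : V → Finset (Finset V)) :
    SimpleGraph (TwoSubVert V P) where
  Adj x y :=
    match x, y with
    | Sum.inl u, Sum.inr (Sum.inl v) => u = v
    | Sum.inr (Sum.inl u), Sum.inl v => u = v
    | Sum.inl u, Sum.inr (Sum.inr p) => u = p.1
    | Sum.inr (Sum.inr p), Sum.inl u => u = p.1
    | Sum.inr (Sum.inr p), Sum.inr (Sum.inr q) =>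
        G.Adj p.1 q.1 ∧ q.1 ∈ p.2.1 ∧ p.1 ∈ q.2.1
    | _, _ => False
  symm := by
    constructor
    rintro (u | u | p) (v | v | q) h
    all_goals first
      | exact h
      | exact h.symm
      | exact ⟨h.1.symm, h.2.2, h.2.1⟩
  loopless := by
    constructor
    rintro (u | u | p) h
    · exact h
    · exact h
    · exact G.irrefl h.1

/- Every vertex of `G(P)` lies in the closed neighbourhood `N[v]` of exactly one original vertex
`v`, its base. Two vertices with a common base are at distance at most `2`, so a 2-packing meets
each `N[v]` at most once and has at most `|V(G)|` vertices. Conversely, a neighbour of an original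
vertex `v` has base `v`, so no path of length at most `2` joins two distinct original vertices;
since `G(P)` is connected when `G` is, they are at distance at least `3`. -/

section Packing

variable {α β : Type*} {G : SimpleGraph α}

theorem Is2Packing.ncard_le_of_dist_le_two [Finite β] {S : Set α} (hS : Is2Packing G S)
    (f : α → β) (hf : ∀ x y, f x = f y → G.dist x y ≤ 2) : S.ncard ≤ Nat.card β := by
  have hinj : Set.InjOn f S := fun x hx y hy hxy => by
    by_contra hne
    have := hS x hx y hy hne
    have := hf x y hxy
    omega
  rw [← hinj.ncard_image]
  exact Set.ncard_le_card _

theorem packingNumber_eq_of_forall_ncard_le [Fintype α] (S₀ : Set α) (h₀ : Is2Packing G S₀)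
    (h : ∀ S : Set α, Is2Packing G S → S.ncard ≤ S₀.ncard) :
    packingNumber G = S₀.ncard := by
  rw [Set.ncard_eq_toFinset_card S₀]
  refine IsGreatest.csSup_eq ⟨⟨_, rfl, by rwa [Set.Finite.coe_toFinset]⟩, ?_⟩
  rintro _ ⟨S, rfl, hS⟩
  rw [← Set.ncard_eq_toFinset_card S₀, ← Set.ncard_coe_finset]
  exact h S hS

end Packing

namespace TwoSubVert

variable {V : Type*} {P : V → Finset (Finset V)}

def base : TwoSubVert V P → V
  | Sum.inl v => v
  | Sum.inr (Sum.inl v) => v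
  | Sum.inr (Sum.inr p) => p.1

end TwoSubVert

section TwoSubdivision

variable {V : Type*} {G : SimpleGraph V} {P : V → Finset (Finset V)}

theorem twoSubdivision_eq_or_adj_inl_base (x : TwoSubVert V P) :
    x = Sum.inl x.base ∨ (twoSubdivision G P).Adj x (Sum.inl x.base) := by
  rcases x with v | v | p
  · exact Or.inl rfl
  · exact Or.inr rfl
  · exact Or.inr rfl

theorem twoSubdivision_dist_inl_base_le_one (x : TwoSubVert V P) :
    (twoSubdivision G P).dist x (Sum.inl x.base) ≤ 1 := by
  rcases twoSubdivision_eq_or_adj_inl_base (G := G) x with h | h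
  · rw [← h, dist_self]
    exact zero_le_one
  · exact (dist_eq_one_iff_adj.2 h).le

theorem twoSubdivision_dist_le_two_of_base_eq {x y : TwoSubVert V P} (h : x.base = y.base) :
    (twoSubdivision G P).dist x y ≤ 2 := by
  have hx : (twoSubdivision G P).Reachable x (Sum.inl x.base) :=
    (twoSubdivision_eq_or_adj_inl_base x).elim (fun h => h ▸ Reachable.refl _) Adj.reachable
  calc (twoSubdivision G P).dist x y
      ≤ (twoSubdivision G P).dist x (Sum.inl x.base)
          + (twoSubdivision G P).dist (Sum.inl x.base) y := hx.dist_triangle_left y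
    _ ≤ 1 + 1 := by
        refine add_le_add (twoSubdivision_dist_inl_base_le_one x) ?_
        rw [dist_comm, h]
        exact twoSubdivision_dist_inl_base_le_one y

theorem twoSubdivision_base_eq_of_adj_inl {u : V} {y : TwoSubVert V P}
    (h : (twoSubdivision G P).Adj (Sum.inl u) y) : y.base = u := by
  rcases y with v | v | p
  · exact h.elim
  · exact (show u = v from h).symm
  · exact (show u = p.1 from h).symm

theorem twoSubdivision_eq_of_walk_inl_length_le_two {u v : V}
    (p : (twoSubdivision G P).Walk (Sum.inl u) (Sum.inl v)) (hp : p.length ≤ 2) : u = v := by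
  match p, hp with
  | .nil, _ => rfl
  | .cons h .nil, _ => exact h.elim
  | .cons h (.cons h' .nil), _ =>
    exact (twoSubdivision_base_eq_of_adj_inl h).symm.trans
      (twoSubdivision_base_eq_of_adj_inl h'.symm)
  | .cons _ (.cons _ (.cons _ _)), hp =>
    simp only [Walk.length_cons] at hp
    omega

theorem twoSubdivision_reachable_inl
    (hcover : ∀ v w, G.Adj v w → ∃ A ∈ P v, w ∈ A) {u v : V} (h : G.Reachable u v) :
    (twoSubdivision G P).Reachable (Sum.inl u) (Sum.inl v) := by
  obtain ⟨p⟩ := h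
  induction p with
  | nil => rfl
  | @cons a b _ hab _ ih =>
    obtain ⟨A, hA, hbA⟩ := hcover a b hab
    obtain ⟨B, hB, haB⟩ := hcover b a hab.symm
    let x : TwoSubVert V P := Sum.inr (Sum.inr ⟨a, A, hA⟩)
    let y : TwoSubVert V P := Sum.inr (Sum.inr ⟨b, B, hB⟩)
    have hax : (twoSubdivision G P).Adj (Sum.inl a) x := rfl
    have hxy : (twoSubdivision G P).Adj x y := ⟨hab, hbA, haB⟩
    have hyb : (twoSubdivision G P).Adj y (Sum.inl b) := rfl
    exact hax.reachable.trans <| hxy.reachable.trans <| hyb.reachable.trans ih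

theorem twoSubdivision_is2Packing_range_inl (hconn : G.Connected)
    (hcover : ∀ v w, G.Adj v w → ∃ A ∈ P v, w ∈ A) :
    Is2Packing (twoSubdivision G P) (Set.range (Sum.inl : V → TwoSubVert V P)) := by
  rintro _ ⟨u, rfl⟩ _ ⟨v, rfl⟩ hne
  obtain ⟨p, hp⟩ :=
    (twoSubdivision_reachable_inl hcover (hconn.preconnected u v)).exists_walk_length_eq_dist
  by_contra! hlt
  exact hne (congrArg _ (twoSubdivision_eq_of_walk_inl_length_le_two p (by omega)))

end TwoSubdivision

theorem twoSubdivision_max_packing_general {V : Type*} [Fintype V]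
    (G : SimpleGraph V) [DecidableRel G.Adj] (hconn : G.Connected)
    (P : V → Finset (Finset V))
    (hP : ∀ v : V, IsFinsetPartitionOf (P v) (G.neighborFinset v)) :
    Is2Packing (twoSubdivision G P) (Set.range (Sum.inl : V → TwoSubVert V P)) ∧
    (∀ S : Set (TwoSubVert V P), Is2Packing (twoSubdivision G P) S →
      S.ncard ≤ (Set.range (Sum.inl : V → TwoSubVert V P)).ncard) ∧
    packingNumber (twoSubdivision G P) = Fintype.card V := by
  have hcover : ∀ v w, G.Adj v w → ∃ A ∈ P v, w ∈ A := fun v w h =>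
    ((hP v).2.1 w).1 ((G.mem_neighborFinset v w).2 h)
  have hpack := twoSubdivision_is2Packing_range_inl hconn hcover
  have hmax : ∀ S : Set (TwoSubVert V P), Is2Packing (twoSubdivision G P) S →
      S.ncard ≤ (Set.range (Sum.inl : V → TwoSubVert V P)).ncard := fun S hS => by
    rw [Set.ncard_range_of_injective Sum.inl_injective]
    exact hS.ncard_le_of_dist_le_two TwoSubVert.base fun _ _ =>
      twoSubdivision_dist_le_two_of_base_eq
  refine ⟨hpack, hmax, ?_⟩
  rw [packingNumber_eq_of_forall_ncard_le _ hpack hmax,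
    Set.ncard_range_of_injective Sum.inl_injective, Nat.card_eq_fintype_card]

/-- In the 2-subdivision `G(P)` of a connected graph `G` of order at
least `2`, the set `V(G)` of original vertices is a maximum 2-packing, and
`ρ(G(P)) = |V(G)|`. -/
theorem twoSubdivision_max_packing {V : Type*} [Fintype V] [DecidableEq V]
    (G : SimpleGraph V) [DecidableRel G.Adj] (hconn : G.Connected)
    (h2 : 2 ≤ Fintype.card V) (P : V → Finset (Finset V))
    (hP : ∀ v : V, IsFinsetPartitionOf (P v) (G.neighborFinset v)) :
    Is2Packing (twoSubdivision G P) (Set.range (Sum.inl : V → TwoSubVert V P)) ∧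
    (∀ S : Set (TwoSubVert V P), Is2Packing (twoSubdivision G P) S →
      S.ncard ≤ (Set.range (Sum.inl : V → TwoSubVert V P)).ncard) ∧
    packingNumber (twoSubdivision G P) = Fintype.card V :=
  twoSubdivision_max_packing_general G hconn P hP
end

section
/- Let G be a connected graph of order at least 2 and P a family assigning to each vertex v a partition P(v) of N_G(v). Then in the 2-subdivision G(P), the set of weak support vertices is exactly V(G). -/
open SimpleGraph

variable {V : Type*}

/-!
The only neighbour of a pendant leaf `(v,1)` is `v`, whereas every other vertex of `G(P)` has
two neighbours: a vertex `v` of `G` is adjacent to `(v,1)` and, as `v` is not isolated, to some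
`(v,A)`; a vertex `(v,A)` is adjacent to `v` and, for `w ∈ A`, to the vertex `(w,B)` with `v ∈ B`.
So the leaves of `G(P)` are exactly the pendant leaves, and each `v` supports exactly one of them.
-/

lemma not_isLeaf_of_adj_of_adj_s7 {H : SimpleGraph V} {v a b : V}
    (ha : H.Adj v a) (hb : H.Adj v b) (hab : a ≠ b) : ¬ IsLeaf H v :=
  fun ⟨_, _, hu⟩ => hab ((hu a ha).trans (hu b hb).symm)

namespace IsFinsetPartitionOf

variable {α : Type*} {Pf : Finset (Finset α)} {S : Finset α}

lemma exists_mem_block (h : IsFinsetPartitionOf Pf S) {x : α} (hx : x ∈ S) :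
    ∃ A ∈ Pf, x ∈ A :=
  (h.2.1 x).1 hx

lemma mem_of_mem_block (h : IsFinsetPartitionOf Pf S) {A : Finset α} (hA : A ∈ Pf) {x : α}
    (hx : x ∈ A) : x ∈ S :=
  (h.2.1 x).2 ⟨A, hA, hx⟩

end IsFinsetPartitionOf

namespace twoSubdivision

variable {G : SimpleGraph V} {P : V → Finset (Finset V)}

lemma adj_pendant_iff {x : TwoSubVert V P} {v : V} :
    (twoSubdivision G P).Adj x (Sum.inr (Sum.inl v)) ↔ x = Sum.inl v := by
  rcases x with u | u | q <;> simp [twoSubdivision]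

lemma isLeaf_pendant (v : V) : IsLeaf (twoSubdivision G P) (Sum.inr (Sum.inl v)) :=
  ⟨Sum.inl v, rfl, fun _ h => adj_pendant_iff.1 h.symm⟩

lemma not_isLeaf_inl {v : V} {A : Finset V} (hA : A ∈ P v) :
    ¬ IsLeaf (twoSubdivision G P) (Sum.inl v) :=
  not_isLeaf_of_adj_of_adj_s7 (a := Sum.inr (Sum.inl v)) (b := Sum.inr (Sum.inr ⟨v, A, hA⟩))
    rfl rfl (by simp)

lemma not_isLeaf_block {v w : V} {A B : Finset V} (hA : A ∈ P v) (hB : B ∈ P w)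
    (hvw : G.Adj v w) (hwA : w ∈ A) (hvB : v ∈ B) :
    ¬ IsLeaf (twoSubdivision G P) (Sum.inr (Sum.inr ⟨v, A, hA⟩)) :=
  not_isLeaf_of_adj_of_adj_s7 (a := Sum.inl v) (b := Sum.inr (Sum.inr ⟨w, B, hB⟩))
    rfl ⟨hvw, hwA, hvB⟩ (by simp)

lemma exists_eq_pendant_of_isLeaf [G.LocallyFinite]
    (hP : ∀ v, IsFinsetPartitionOf (P v) (G.neighborFinset v)) (hG : ∀ v, ∃ w, G.Adj v w)
    {x : TwoSubVert V P} (hx : IsLeaf (twoSubdivision G P) x) :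
    ∃ v, x = Sum.inr (Sum.inl v) := by
  rcases x with v | v | ⟨v, A, hA⟩
  · obtain ⟨w, hvw⟩ := hG v
    obtain ⟨A, hA, -⟩ := (hP v).exists_mem_block ((G.mem_neighborFinset v w).2 hvw)
    exact (not_isLeaf_inl hA hx).elim
  · exact ⟨v, rfl⟩
  · obtain ⟨w, hwA⟩ := (hP v).1 A hA
    have hvw : G.Adj v w := (G.mem_neighborFinset v w).1 ((hP v).mem_of_mem_block hA hwA)
    obtain ⟨B, hB, hvB⟩ := (hP w).exists_mem_block ((G.mem_neighborFinset w v).2 hvw.symm)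
    exact (not_isLeaf_block hA hB hvw hwA hvB hx).elim

lemma isWeakSupport_iff [G.LocallyFinite]
    (hP : ∀ v, IsFinsetPartitionOf (P v) (G.neighborFinset v)) (hG : ∀ v, ∃ w, G.Adj v w)
    {x : TwoSubVert V P} :
    IsWeakSupport (twoSubdivision G P) x ↔ ∃ v, x = Sum.inl v := by
  have leaf_nbr : ∀ u, (twoSubdivision G P).Adj x u ∧ IsLeaf (twoSubdivision G P) u ↔
      ∃ v, x = Sum.inl v ∧ u = Sum.inr (Sum.inl v) := by
    refine fun u => ⟨fun ⟨hxu, hu⟩ => ?_, ?_⟩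
    · obtain ⟨v, rfl⟩ := exists_eq_pendant_of_isLeaf hP hG hu
      exact ⟨v, adj_pendant_iff.1 hxu, rfl⟩
    · rintro ⟨v, rfl, rfl⟩
      exact ⟨rfl, isLeaf_pendant v⟩
  simp only [IsWeakSupport, leaf_nbr]
  constructor
  · rintro ⟨_, ⟨v, hx, -⟩, -⟩
    exact ⟨v, hx⟩
  · rintro ⟨v, rfl⟩
    refine ⟨Sum.inr (Sum.inl v), ⟨v, rfl, rfl⟩, ?_⟩
    rintro _ ⟨w, hvw, rfl⟩
    rw [Sum.inl_injective hvw]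

end twoSubdivision

theorem twoSubdivision_weak_supports_general {V : Type*} [Fintype V]
    (G : SimpleGraph V) [DecidableRel G.Adj] (hconn : G.Connected)
    (h2 : 2 ≤ Fintype.card V) (P : V → Finset (Finset V))
    (hP : ∀ v : V, IsFinsetPartitionOf (P v) (G.neighborFinset v)) :
    {x : TwoSubVert V P | IsWeakSupport (twoSubdivision G P) x} =
      Set.range (Sum.inl : V → TwoSubVert V P) := by
  have : Nontrivial V := Fintype.one_lt_card_iff_nontrivial.1 h2
  ext x
  exact (twoSubdivision.isWeakSupport_iff hP hconn.preconnected.exists_adj_of_nontrivial).trans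
    (by simp only [Set.mem_range, eq_comm])

/-- In the 2-subdivision `G(P)` of a connected graph `G` of order at
least `2`, the set of weak support vertices is exactly `V(G)`. -/
theorem twoSubdivision_weak_supports {V : Type*} [Fintype V] [DecidableEq V]
    (G : SimpleGraph V) [DecidableRel G.Adj] (hconn : G.Connected)
    (h2 : 2 ≤ Fintype.card V) (P : V → Finset (Finset V))
    (hP : ∀ v : V, IsFinsetPartitionOf (P v) (G.neighborFinset v)) :
    {x : TwoSubVert V P | IsWeakSupport (twoSubdivision G P) x} =
      Set.range (Sum.inl : V → TwoSubVert V P) :=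
  twoSubdivision_weak_supports_general G hconn h2 P hP
end

section
/- Let T be a tree of order at least 6 such that the vertices of T can be labeled A or B with the properties: (i) every vertex of T has exactly one neighbor labeled B, and (ii) every leaf and every support vertex of T is labeled B. Then the set F of all edges whose both endpoints are labeled B contains every pendant edge of T, and every edge of F is at edge-distance exactly 3 from every other edge of F closest to it, i.e., d_T(e, F \ {e}) = 3 for every e ∈ F. -/
open SimpleGraph

variable {V : Type*}

/-! Every vertex has exactly one B-neighbour, so the two ends of a B–B edge are each other's
B-neighbours. Hence the ends of two distinct B–B edges never coincide, are never adjacent and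
never share a neighbour (it would have two B-neighbours): the edges are at distance at least 3.
Conversely, a vertex `x ≠ a` next to `b` is labelled A, so it is not a leaf and has a neighbour
`y ≠ b`, again labelled A. The B-neighbour `z` of `y` and the B-neighbour `w` of `z` form a B–B
edge within distance 3 of `ab`, and acyclicity keeps `z` off `{a, b}`. -/

variable {G : SimpleGraph V} {u v w x a b : V}

namespace SimpleGraph

lemma IsAcyclic.length_eq_dist (hG : G.IsAcyclic) {p : G.Walk u v} (hp : p.IsPath) :
    p.length = G.dist u v := by
  obtain ⟨q, hq, hqlen⟩ := p.reachable.exists_path_of_dist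
  have hpq : p = q := congrArg Subtype.val ((hG.subsingleton_path u v).elim ⟨p, hp⟩ ⟨q, hq⟩)
  rw [hpq, hqlen]

lemma Connected.three_le_dist (hG : G.Connected) (huv : u ≠ v) (hadj : ¬ G.Adj u v)
    (hcommon : ∀ m, G.Adj u m → ¬ G.Adj m v) : 3 ≤ G.dist u v := by
  have h : 2 < G.edist u v := two_lt_edist_iff.mpr ⟨huv, hadj,
    Set.eq_empty_iff_forall_notMem.mpr fun m hm => by
      rw [mem_commonNeighbors] at hm
      exact hcommon m hm.1 hm.2.symm⟩
  rw [← (hG u v).coe_dist_eq_edist] at h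
  exact_mod_cast h

lemma Connected.exists_adj_outside_pair (hG : G.Connected) {y : V} (hya : y ≠ a) (hyb : y ≠ b) :
    ∃ c ∈ ({a, b} : Set V), ∃ x, G.Adj c x ∧ x ≠ a ∧ x ≠ b := by
  obtain ⟨d, -, hd, hd'⟩ :=
    (hG a y).some.exists_boundary_dart {a, b} (by simp) (by simp [hya, hyb])
  simp only [Set.mem_insert_iff, Set.mem_singleton_iff, not_or] at hd'
  exact ⟨d.fst, hd, d.snd, d.adj, hd'⟩

end SimpleGraph

lemma exists_adj_ne_of_not_isLeaf_s17 (hx : ¬ IsLeaf G x) (hxb : G.Adj x b) :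
    ∃ y, G.Adj x y ∧ y ≠ b := by
  by_contra! h
  exact hx ⟨b, hxb, h⟩

lemma le_edgeDist {n : ℕ} {e f : Sym2 V} (h : ∀ u ∈ e, ∀ v ∈ f, n ≤ G.dist u v) :
    n ≤ edgeDist G e f :=
  le_csInf ⟨_, _, e.out_fst_mem, _, f.out_fst_mem, rfl⟩
    fun _ ⟨u, hu, v, hv, huv⟩ => huv ▸ h u hu v hv

lemma edgeDist_le_dist {e f : Sym2 V} (hu : u ∈ e) (hv : v ∈ f) :
    edgeDist G e f ≤ G.dist u v :=
  Nat.sInf_le ⟨u, hu, v, hv, rfl⟩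

lemma edistToSet_eq {n : ℕ} {e f₀ : Sym2 V} {F : Set (Sym2 V)}
    (h : ∀ f ∈ F, n ≤ edgeDist G e f) (hf₀ : f₀ ∈ F) (hf₀n : edgeDist G e f₀ ≤ n) :
    edistToSet G e F = n := by
  unfold edistToSet
  refine le_antisymm (le_trans ?_ hf₀n)
    (le_csInf ⟨_, f₀, hf₀, rfl⟩ fun _ ⟨f, hf, hfn⟩ => hfn ▸ h f hf)
  exact Nat.sInf_le ⟨f₀, hf₀, rfl⟩

def bbEdgeSet (G : SimpleGraph V) (label : V → Bool) : Set (Sym2 V) :=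
  {e ∈ G.edgeSet | ∀ x ∈ e, label x = true}

section Labeling

variable {label : V → Bool} {e f : Sym2 V}

@[simp]
lemma mk_mem_bbEdgeSet :
    s(u, v) ∈ bbEdgeSet G label ↔ G.Adj u v ∧ label u = true ∧ label v = true := by
  simp [bbEdgeSet]

lemma eq_of_mem_bbEdgeSet_of_adj (hi : ∀ v, ∃! u, G.Adj v u ∧ label u = true)
    (he : e ∈ bbEdgeSet G label) (hu : u ∈ e) (huw : G.Adj u w) (hw : label w = true) :
    e = s(u, w) := by
  obtain ⟨y, rfl⟩ := Sym2.mem_iff_exists.mp hu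
  rw [mk_mem_bbEdgeSet] at he
  rw [(hi u).unique ⟨he.1, he.2.2⟩ ⟨huw, hw⟩]

lemma SimpleGraph.Connected.three_le_dist_of_mem_bbEdgeSet (hG : G.Connected)
    (hi : ∀ v, ∃! u, G.Adj v u ∧ label u = true)
    (he : e ∈ bbEdgeSet G label) (hf : f ∈ bbEdgeSet G label) (hef : e ≠ f)
    (hu : u ∈ e) (hv : v ∈ f) : 3 ≤ G.dist u v := by
  have hlu := he.2 u hu
  have hlv := hf.2 v hv
  have huv : u ≠ v := by
    rintro rfl
    obtain ⟨w, rfl⟩ := Sym2.mem_iff_exists.mp hu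
    rw [mk_mem_bbEdgeSet] at he
    exact hef (eq_of_mem_bbEdgeSet_of_adj hi hf hv he.1 he.2.2).symm
  refine hG.three_le_dist huv (fun hadj => hef ?_) (fun m hum hmv => huv ?_)
  · rw [eq_of_mem_bbEdgeSet_of_adj hi he hu hadj hlv,
      eq_of_mem_bbEdgeSet_of_adj hi hf hv hadj.symm hlu, Sym2.eq_swap]
  · exact (hi m).unique ⟨hum.symm, hlu⟩ ⟨hmv, hlv⟩

lemma SimpleGraph.IsTree.exists_mem_bbEdgeSet_dist_le_three (hG : G.IsTree)
    (hi : ∀ v, ∃! u, G.Adj v u ∧ label u = true)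
    (hleaf : ∀ v, IsLeaf G v → label v = true)
    (hab : s(a, b) ∈ bbEdgeSet G label) (hbx : G.Adj b x) (hxa : x ≠ a) :
    ∃ f ∈ bbEdgeSet G label \ {s(a, b)}, ∃ z ∈ f, G.dist b z ≤ 3 := by
  obtain ⟨hab, hla, hlb⟩ := mk_mem_bbEdgeSet.mp hab
  have hlx : label x = false := by
    by_contra! h
    exact hxa ((hi b).unique ⟨hbx, by simpa using h⟩ ⟨hab.symm, hla⟩)
  obtain ⟨y, hxy, hyb⟩ :=
    exists_adj_ne_of_not_isLeaf_s17 (fun h => by simp [hleaf x h] at hlx) hbx.symm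
  have hly : label y = false := by
    by_contra! h
    exact hyb ((hi x).unique ⟨hxy, by simpa using h⟩ ⟨hbx.symm, hlb⟩)
  obtain ⟨z, ⟨hyz, hlz⟩, -⟩ := hi y
  obtain ⟨w, ⟨hzw, hlw⟩, -⟩ := hi z
  have hp : (Walk.cons hab (.cons hbx (.cons hxy .nil))).IsPath := by
    have hya : y ≠ a := by rintro rfl; simp [hla] at hly
    simp [Walk.cons_isPath_iff, hab.ne, hbx.ne, hxy.ne, hxa.symm, hya.symm, hyb.symm]
  have hay : G.dist a y = 3 := (hG.isAcyclic.length_eq_dist hp).symm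
  have hby : G.dist b y = 2 := (hG.isAcyclic.length_eq_dist hp.of_cons).symm
  have hza : z ≠ a := by rintro rfl; simp [dist_eq_one_iff_adj.mpr hyz.symm] at hay
  have hzb : z ≠ b := by rintro rfl; simp [dist_eq_one_iff_adj.mpr hyz.symm] at hby
  refine ⟨s(z, w), ⟨mk_mem_bbEdgeSet.mpr ⟨hzw, hlz, hlw⟩, ?_⟩, z, Sym2.mem_mk_left z w, ?_⟩
  · simp [hza, hzb]
  · simpa using dist_le (Walk.cons hbx (.cons hxy (.cons hyz .nil)))

lemma SimpleGraph.IsTree.edistToSet_bbEdgeSet_eq_three (hG : G.IsTree)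
    (hi : ∀ v, ∃! u, G.Adj v u ∧ label u = true)
    (hleaf : ∀ v, IsLeaf G v → label v = true)
    (hab : s(a, b) ∈ bbEdgeSet G label) (hbx : G.Adj b x) (hxa : x ≠ a) :
    edistToSet G s(a, b) (bbEdgeSet G label \ {s(a, b)}) = 3 := by
  obtain ⟨f, hf, z, hz, hbz⟩ := hG.exists_mem_bbEdgeSet_dist_le_three hi hleaf hab hbx hxa
  have hfar : ∀ f ∈ bbEdgeSet G label \ {s(a, b)}, 3 ≤ edgeDist G s(a, b) f :=
    fun f hf => le_edgeDist fun u hu v hv =>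
      hG.connected.three_le_dist_of_mem_bbEdgeSet hi hab hf.1 (Ne.symm hf.2) hu hv
  exact edistToSet_eq hfar hf ((edgeDist_le_dist (Sym2.mem_mk_right a b) hz).trans hbz)

end Labeling

/-- If the vertices of a tree `T` of order at least `6` are labeled `A`/`B`
(`B` = `true`) so that every vertex has exactly one neighbor labeled `B` and every leaf
and support vertex is labeled `B`, then the set `F` of B–B edges contains every pendant
edge and every edge of `F` is at edge-distance exactly `3` from `F \ {e}`. -/
theorem BB_edges_property {V : Type*} [Fintype V]
    (T : SimpleGraph V) (hT : T.IsTree) (h6 : 6 ≤ Fintype.card V)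
    (label : V → Bool)
    (hi : ∀ v : V, ∃! u : V, T.Adj v u ∧ label u = true)
    (hii : ∀ v : V, (IsLeaf T v ∨ IsSupport T v) → label v = true) :
    (∀ e, IsPendantEdge T e →
        e ∈ {e ∈ T.edgeSet | ∀ x ∈ e, label x = true}) ∧
    ∀ e ∈ {e ∈ T.edgeSet | ∀ x ∈ e, label x = true},
      edistToSet T e ({e' ∈ T.edgeSet | ∀ x ∈ e', label x = true} \ {e}) = 3 := by
  classical
  have hleaf : ∀ v, IsLeaf T v → label v = true := fun v hv => hii v (.inl hv)
  refine ⟨?_, fun e he => ?_⟩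
  · rintro _ ⟨u, v, rfl, huv, hu⟩
    exact mk_mem_bbEdgeSet.mpr ⟨huv, hleaf u hu, hii v (.inr ⟨u, huv.symm, hu⟩)⟩
  induction e using Sym2.ind with | _ a b => ?_
  obtain ⟨y, -, hy⟩ := Finset.exists_mem_notMem_of_card_lt_card (s := {a, b})
    (t := Finset.univ) (by rw [Finset.card_univ]; linarith [Finset.card_le_two (a := a) (b := b)])
  simp only [Finset.mem_insert, Finset.mem_singleton, not_or] at hy
  obtain ⟨c, hc, x, hcx, hxa, hxb⟩ := hT.connected.exists_adj_outside_pair hy.1 hy.2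
  rcases hc with rfl | rfl
  · rw [Sym2.eq_swap] at he ⊢
    exact hT.edistToSet_bbEdgeSet_eq_three hi hleaf he hcx hxb
  · exact hT.edistToSet_bbEdgeSet_eq_three hi hleaf he hcx hxa
end
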